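/- Assume cov(M) = c. Then there exists a Menger totally imperfect set X ⊆ 2^ω × 2^ω whose projection onto the first coordinate is all of 2^ω. -/

import Mathlib

open Set Filter Topology MeasureTheory

abbrev Cantor : Type := ℕ → Bool

/-- Coordinatewise addition mod 2 on the Cantor space. -/
def cadd (s t : Cantor) : Cantor := fun n => xor (s n) (t n)

/-- Translate of a set: `t ⊕ P`. -/
def tAdd (t : Cantor) (P : Set Cantor) : Set Cantor := (cadd t) '' P

/-- Vertical section of a subset of the plane `Cantor × Cantor`. -/
def sect (A : Set (Cantor × Cantor)) (x : Cantor) : Set Cantor := {y | (x, y) ∈ A}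

/-- A set is Fσ if it is a countable union of closed sets. -/
def IsFSigma {Z : Type*} [TopologicalSpace Z] (s : Set Z) : Prop :=
  ∃ f : ℕ → Set Z, (∀ n, IsClosed (f n)) ∧ s = ⋃ n, f n

/-- The Hurewicz covering property for a subset of a topological space. -/
def Hurewicz {Z : Type*} [TopologicalSpace Z] (X : Set Z) : Prop :=
  ∀ U : ℕ → Set (Set Z), (∀ n, (∀ u ∈ U n, IsOpen u) ∧ X ⊆ ⋃₀ U n) →
    ∃ F : ℕ → Set (Set Z), (∀ n, F n ⊆ U n ∧ (F n).Finite) ∧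
      ∀ x ∈ X, ∀ᶠ n in atTop, x ∈ ⋃₀ F n

/-- The Menger covering property for a subset of a topological space. -/
def Menger {Z : Type*} [TopologicalSpace Z] (X : Set Z) : Prop :=
  ∀ U : ℕ → Set (Set Z), (∀ n, (∀ u ∈ U n, IsOpen u) ∧ X ⊆ ⋃₀ U n) →
    ∃ F : ℕ → Set (Set Z), (∀ n, F n ⊆ U n ∧ (F n).Finite) ∧
      X ⊆ ⋃ n, ⋃₀ F n

/-- λ'-set: every countable set `A` of the ambient space is Gδ relative to `X ∪ A`. -/
def LambdaPrime {Z : Type*} [TopologicalSpace Z] (X : Set Z) : Prop :=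
  ∀ A : Set Z, A.Countable → ∃ G : Set Z, IsGδ G ∧ (X ∪ A) ∩ G = A

/-- A set is totally imperfect if it contains no (nonempty) perfect subset. -/
def TotallyImperfect {Z : Type*} [TopologicalSpace Z] (X : Set Z) : Prop :=
  ∀ P : Set Z, P ⊆ X → Perfect P → P = ∅

/-- Perfectly meager in the transitive sense. -/
def PMT (X : Set Cantor) : Prop :=
  ∀ P : Set Cantor, Perfect P → P.Nonempty →
    ∃ F : Set Cantor, IsSigmaCompact F ∧ X ⊆ F ∧
      ∀ t : Cantor, IsMeagre (Subtype.val ⁻¹' F : Set (tAdd t P))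

/-- `μ` is the standard product (Haar) probability measure on the Cantor space. -/
def IsCantorMeasure (μ : Measure Cantor) : Prop :=
  ∀ s : Finset ℕ, ∀ f : ℕ → Bool,
    μ {x : Cantor | ∀ i ∈ s, x i = f i} = (1 / 2 : ENNReal) ^ s.card

/-- cov(N) with respect to a measure μ on the Cantor space. -/
noncomputable def covNull (μ : Measure Cantor) : Cardinal :=
  sInf { c : Cardinal | ∃ S : Set (Set Cantor), Cardinal.mk S = c ∧
    (∀ A ∈ S, μ A = 0) ∧ ⋃₀ S = univ }

/-- cov(M) : least size of a family of meager sets covering the Cantor space. -/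
noncomputable def covMeager : Cardinal :=
  sInf { c : Cardinal | ∃ S : Set (Set Cantor), Cardinal.mk S = c ∧
    (∀ A ∈ S, IsMeagre A) ∧ ⋃₀ S = univ }

/-- The bounding number b: least size of an unbounded family in (ω^ω, ≤*). -/
noncomputable def boundingNumber : Cardinal :=
  sInf { c : Cardinal | ∃ S : Set (ℕ → ℕ), Cardinal.mk S = c ∧
    ¬ ∃ g : ℕ → ℕ, ∀ f ∈ S, ∀ᶠ n in atTop, f n ≤ g n }

/-!
Well-order the Cantor space in order type `𝔠` and use it also to index all sequences of countable
open covers of the plane and all closed subsets of the plane. Above each point `x`, take for the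
section of `X` a countable dense set avoiding the fewer than `𝔠 = cov(M)` meagre sets attached to
the indices up to `x`: for a sequence of covers whose levels have dense sections, the complement of
the section of an open set with dense sections built from finitely many members of each level;
for a closed set, its section at `x` when that is countable. Covers of `X` have dense sections, so
the finite selection covers all but fewer than `cov(M)` points of `X`, and a set of fewer than
`cov(M)` points needs just one more member of each cover (it has the Rothberger property).
A perfect `P ⊆ X` has `𝔠` points, so it has a point above some `x` past the index of `P`; the
section of `P` there is countable and nonempty, yet was avoided.
-/

open Cardinal hiding univ
open TopologicalSpace

namespace Cantor

lemma not_isOpen_singleton (x : Cantor) : ¬ IsOpen ({x} : Set Cantor) := by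
  intro h
  obtain ⟨_, ⟨z, n, rfl⟩, hx, hsub⟩ := (PiNat.isTopologicalBasis_cylinders fun _ => Bool)
    |>.exists_subset_of_mem_open (mem_singleton x) h
  rw [← PiNat.mem_cylinder_iff_eq.1 hx] at hsub
  simpa using congrFun (hsub (PiNat.update_mem_cylinder x n (!x n))) n

lemma isMeagre_of_countable {A : Set Cantor} (hA : A.Countable) : IsMeagre A := by
  rw [← biUnion_of_singleton A]
  refine isMeagre_biUnion hA fun x _ => IsNowhereDense.isMeagre ?_
  rw [isClosed_singleton.isNowhereDense_iff]
  exact (subset_singleton_iff_eq.1 interior_subset).resolve_right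
    fun h => not_isOpen_singleton x (h ▸ isOpen_interior)

lemma isOpen_setOf_apply_eq (i : ℕ) (b : Bool) : IsOpen {x : Cantor | x i = b} :=
  (isOpen_discrete {b}).preimage (continuous_apply (A := fun _ => Bool) i)

end Cantor

lemma cadd_comm (s t : Cantor) : cadd s t = cadd t s := funext fun _ => Bool.xor_comm _ _

lemma cadd_cadd (s t : Cantor) : cadd s (cadd s t) = t := funext fun _ => by simp [cadd]

lemma continuous_cadd (s : Cantor) : Continuous (cadd s) :=
  continuous_pi fun n => (continuous_of_discreteTopology (f := xor (s n))).comp (continuous_apply n)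

def caddHomeomorph (s : Cantor) : Cantor ≃ₜ Cantor where
  toFun := cadd s
  invFun := cadd s
  left_inv := cadd_cadd s
  right_inv := cadd_cadd s
  continuous_toFun := continuous_cadd s
  continuous_invFun := continuous_cadd s

lemma exists_forall_notMem_of_mk_lt_covMeager {ι : Type} (M : ι → Set Cantor)
    (hM : ∀ i, IsMeagre (M i)) (hι : #ι < covMeager) : ∃ y, ∀ i, y ∉ M i := by
  by_contra! hcov
  have hle : covMeager ≤ #(range M) := csInf_le'
    ⟨range M, rfl, forall_mem_range.2 hM, eq_univ_of_forall fun y => by simpa using hcov y⟩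
  exact (hle.trans mk_range_le).not_gt hι

lemma aleph0_lt_covMeager : ℵ₀ < covMeager := by
  obtain ⟨S, hS, hM, hcov⟩ : covMeager ∈ _ := csInf_mem ⟨_, range singleton, rfl,
    forall_mem_range.2 fun x => Cantor.isMeagre_of_countable (countable_singleton x),
    by simp [sUnion_range, iUnion_of_singleton]⟩
  by_contra! hle
  have : IsMeagre (univ : Set Cantor) := by
    rw [← hcov, sUnion_eq_biUnion]
    exact isMeagre_biUnion (le_aleph0_iff_set_countable.1 (hS ▸ hle)) hM
  exact not_isMeagre_of_isOpen isOpen_univ univ_nonempty this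

lemma exists_denseRange_forall_notMem {ι : Type} (M : ι → Set Cantor)
    (hM : ∀ i, IsMeagre (M i)) (hι : #ι < covMeager) :
    ∃ y : ℕ → Cantor, DenseRange y ∧ ∀ n i, y n ∉ M i := by
  obtain ⟨d, hd⟩ := exists_dense_seq Cantor
  have hsmall : #(ℕ × ι) < covMeager := by
    rw [mk_prod, lift_id, lift_id, mk_nat]
    exact mul_lt_of_lt aleph0_lt_covMeager.le aleph0_lt_covMeager hι
  obtain ⟨z, hz⟩ := exists_forall_notMem_of_mk_lt_covMeager
    (fun q : ℕ × ι => cadd (d q.1) ⁻¹' M q.2)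
    (fun q => (hM q.2).preimage_of_isOpenMap (continuous_cadd _) (caddHomeomorph _).isOpenMap)
    hsmall
  refine ⟨fun n => cadd (d n) z, ?_, fun n i => hz (n, i)⟩
  simp_rw [cadd_comm _ z]
  exact (caddHomeomorph z).surjective.denseRange.comp hd (continuous_cadd z)

/-- `x` read as a sequence of naturals: the `n`-th term is the least `k` with
`x (Nat.pair n k) = true`, and `0` if there is none. -/
noncomputable def Cantor.toNatSeq (x : Cantor) (n : ℕ) : ℕ := sInf {k | x (Nat.pair n k) = true}

lemma Cantor.isMeagre_setOf_forall_toNatSeq_ne (g : ℕ → ℕ) :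
    IsMeagre {x : Cantor | ∀ n, toNatSeq x n ≠ g n} := by
  set E : ℕ → Set Cantor := fun n =>
    {x | x (Nat.pair n (g n)) = true} ∩ ⋂ j ∈ Iio (g n), {x | x (Nat.pair n j) = false}
  have hE : ∀ n, ∀ x ∈ E n, toNatSeq x n = g n := by
    rintro n x ⟨hg, hlt⟩
    refine le_antisymm (Nat.sInf_le hg) (le_csInf ⟨_, hg⟩ fun k hk => not_lt.1 fun hkg => ?_)
    exact Bool.false_ne_true ((mem_iInter₂.1 hlt k hkg).symm.trans hk)
  have hopen : IsOpen (⋃ n, E n) := isOpen_iUnion fun n => (isOpen_setOf_apply_eq _ _).inter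
    ((finite_Iio _).isOpen_biInter fun _ _ => isOpen_setOf_apply_eq _ _)
  have hdense : Dense (⋃ n, E n) := by
    refine (PiNat.isTopologicalBasis_cylinders fun _ => Bool).dense_iff.2 ?_
    rintro _ ⟨w, m, rfl⟩ -
    let z : Cantor := fun i => if i < m then w i else decide (i = Nat.pair m (g m))
    have hz : ∀ j, z (Nat.pair m j) = decide (j = g m) := fun j => by
      simp [z, not_lt.2 (Nat.left_le_pair m j), Nat.pair_eq_pair]
    refine ⟨z, PiNat.mem_cylinder_iff.2 fun i hi => if_pos hi, mem_iUnion.2 ⟨m, ?_, ?_⟩⟩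
    · simp [hz]
    · exact mem_iInter₂.2 fun j hj => by simp [hz, (mem_Iio.1 hj).ne]
  refine IsMeagre.mono (s := (⋃ n, E n)ᶜ) (fun x hx hxE => ?_) (by
    rw [IsMeagre, compl_compl]
    exact residual_of_dense_open hopen hdense)
  obtain ⟨n, hn⟩ := mem_iUnion.1 hxE
  exact hx n (hE n x hn)

lemma exists_forall_mem_iUnion_of_mk_lt_covMeager {α : Type} {Y : Set α} (hY : #Y < covMeager)
    (u : ℕ → ℕ → Set α) (hu : ∀ n, Y ⊆ ⋃ k, u n k) : ∃ f : ℕ → ℕ, Y ⊆ ⋃ n, u n (f n) := by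
  choose g hg using fun (p : Y) n => mem_iUnion.1 (hu n p.2)
  obtain ⟨x, hx⟩ := exists_forall_notMem_of_mk_lt_covMeager _
    (fun p => Cantor.isMeagre_setOf_forall_toNatSeq_ne (g p)) hY
  refine ⟨Cantor.toNatSeq x, fun p hp => ?_⟩
  obtain ⟨n, hn⟩ := not_forall_not.1 (hx ⟨p, hp⟩)
  exact mem_iUnion.2 ⟨n, hn ▸ hg ⟨p, hp⟩ n⟩

lemma exists_isTopologicalBasis_range_nat (B : Type*) [TopologicalSpace B]
    [SecondCountableTopology B] : ∃ e : ℕ → Set B, IsTopologicalBasis (range e) := by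
  obtain ⟨e, he⟩ := ((countable_countableBasis B).insert ∅).exists_eq_range (insert_nonempty _ _)
  exact ⟨e, he ▸ (isBasis_countableBasis B).insert_empty⟩

theorem menger_of_forall_nat_covers {Z : Type*} [TopologicalSpace Z] [SecondCountableTopology Z]
    {X : Set Z} (h : ∀ u : ℕ → ℕ → Set Z, (∀ n k, IsOpen (u n k)) → (∀ n, X ⊆ ⋃ k, u n k) →
      ∃ F : ℕ → Finset ℕ, X ⊆ ⋃ n, ⋃ k ∈ F n, u n k) :
    Menger X := by
  intro U hU
  rcases X.eq_empty_or_nonempty with rfl | ⟨p, hp⟩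
  · exact ⟨fun _ => ∅, fun _ => ⟨empty_subset _, finite_empty⟩, empty_subset _⟩
  have hcountable : ∀ n, ∃ u : ℕ → Set Z, range u ⊆ U n ∧ X ⊆ ⋃ k, u k := by
    intro n
    obtain ⟨T, hTc, hTU, hT⟩ := isOpen_sUnion_countable (U n) (hU n).1
    have hXT : X ⊆ ⋃₀ T := hT ▸ (hU n).2
    obtain ⟨s, hs, -⟩ := hXT hp
    obtain ⟨u, rfl⟩ := hTc.exists_eq_range ⟨s, hs⟩
    exact ⟨u, hTU, by rwa [← sUnion_range]⟩
  choose u huU hXu using hcountable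
  obtain ⟨F, hF⟩ := h u (fun n k => (hU n).1 _ (huU n (mem_range_self k))) hXu
  refine ⟨fun n => u n '' F n,
    fun n => ⟨(image_subset_range _ _).trans (huU n), (F n).finite_toSet.image _⟩, ?_⟩
  simpa [sUnion_image] using hF

theorem exists_finset_dense_preimage_mk {A B : Type*} [TopologicalSpace A] [CompactSpace A]
    [TopologicalSpace B] [SecondCountableTopology B] (v : ℕ → ℕ → Set (A × B))
    (hv : ∀ n k, IsOpen (v n k)) (hd : ∀ n x, Dense (Prod.mk x ⁻¹' ⋃ k, v n k)) :
    ∃ F : ℕ → Finset ℕ, ∀ x, Dense (Prod.mk x ⁻¹' ⋃ n, ⋃ k ∈ F n, v n k) := by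
  obtain ⟨e, he⟩ := exists_isTopologicalBasis_range_nat B
  have he_open : ∀ n, IsOpen (e n) := fun n => he.isOpen (mem_range_self n)
  have hlevel : ∀ n, ∃ F : Finset ℕ,
      ∀ x, (e n).Nonempty → ∃ k ∈ F, ∃ y ∈ e n, (x, y) ∈ v n k := by
    intro n
    by_cases hne : (e n).Nonempty
    · obtain ⟨F, hF⟩ := isCompact_univ.elim_finite_subcover
        (fun k => Prod.fst '' (v n k ∩ univ ×ˢ e n))
        (fun k => isOpenMap_fst _ ((hv n k).inter (isOpen_univ.prod (he_open n))))
        fun x _ => by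
          obtain ⟨y, hy, hyv⟩ := (hd n x).inter_open_nonempty _ (he_open n) hne
          obtain ⟨k, hk⟩ := mem_iUnion.1 hyv
          exact mem_iUnion.2 ⟨k, (x, y), ⟨hk, mem_univ _, hy⟩, rfl⟩
      refine ⟨F, fun x _ => ?_⟩
      obtain ⟨k, hk, ⟨x', y⟩, ⟨hxy, -, hy⟩, rfl⟩ := mem_iUnion₂.1 (hF (mem_univ x))
      exact ⟨k, hk, y, hy, hxy⟩
    · exact ⟨∅, fun x h => absurd h hne⟩
  choose F hF using hlevel
  refine ⟨F, fun x => he.dense_iff.2 ?_⟩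
  rintro _ ⟨n, rfl⟩ hne
  obtain ⟨k, hk, y, hy, hxy⟩ := hF n x hne
  exact ⟨y, hy, mem_iUnion.2 ⟨n, mem_iUnion₂.2 ⟨k, hk, hxy⟩⟩⟩

theorem exists_isOpen_dense_preimage_mk_eq_finset {A B : Type*} [TopologicalSpace A]
    [CompactSpace A] [TopologicalSpace B] [SecondCountableTopology B] (v : ℕ → ℕ → Set (A × B))
    (hv : ∀ n k, IsOpen (v n k)) :
    ∃ W : Set (A × B), IsOpen W ∧ (∀ x, Dense (Prod.mk x ⁻¹' W)) ∧
      ((∀ n x, Dense (Prod.mk x ⁻¹' ⋃ k, v n k)) →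
        ∃ F : ℕ → Finset ℕ, W = ⋃ n, ⋃ k ∈ F n, v n k) := by
  by_cases hd : ∀ n x, Dense (Prod.mk x ⁻¹' ⋃ k, v n k)
  · obtain ⟨F, hF⟩ := exists_finset_dense_preimage_mk v hv hd
    exact ⟨_, isOpen_iUnion fun n => isOpen_biUnion fun k _ => hv n k, hF, fun _ => ⟨F, rfl⟩⟩
  · exact ⟨univ, isOpen_univ, fun x => by simp, fun h => absurd h hd⟩

theorem exists_surjective_cantor_isOpen (Z : Type*) [TopologicalSpace Z]
    [SecondCountableTopology Z] :
    ∃ code : Cantor → Set Z, (∀ t, IsOpen (code t)) ∧ ∀ U, IsOpen U → ∃ t, code t = U := by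
  classical
  obtain ⟨e, he⟩ := exists_isTopologicalBasis_range_nat Z
  refine ⟨fun t => ⋃ k ∈ {k | t k = true}, e k,
    fun t => isOpen_biUnion fun k _ => he.isOpen (mem_range_self k),
    fun U hU => ⟨fun k => decide (e k ⊆ U), ?_⟩⟩
  conv_rhs => rw [he.open_eq_sUnion' hU]
  ext p
  simp

theorem exists_surjective_cantor_isOpen_nat_nat (Z : Type*) [TopologicalSpace Z]
    [SecondCountableTopology Z] :
    ∃ code : Cantor → ℕ → ℕ → Set Z, (∀ t n k, IsOpen (code t n k)) ∧
      ∀ u, (∀ n k, IsOpen (u n k)) → ∃ t, code t = u := by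
  obtain ⟨c, hco, hcs⟩ := exists_surjective_cantor_isOpen Z
  refine ⟨fun t n k => c fun m => t (Nat.pair (Nat.pair n k) m), fun t n k => hco _,
    fun u hu => ?_⟩
  choose s hs using fun n k => hcs (u n k) (hu n k)
  exact ⟨fun i => s i.unpair.1.unpair.1 i.unpair.1.unpair.2 i.unpair.2, by simp [hs]⟩

lemma continuum_le_mk_of_perfect {α : Type*} [TopologicalSpace α]
    [IsCompletelyMetrizableSpace α] {C : Set α} (hC : Perfect C) (hne : C.Nonempty) :
    𝔠 ≤ #C := by
  let := upgradeIsCompletelyMetrizable α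
  obtain ⟨f, hfC, -, hf⟩ := hC.exists_nat_bool_injection hne
  simpa using lift_mk_le_lift_mk_of_injective ((injective_codRestrict fun s => hfC ⟨s, rfl⟩).2 hf)

def seqGraph (y : Cantor → ℕ → Cantor) : Set (Cantor × Cantor) := {p | ∃ n, y p.1 n = p.2}

lemma fst_image_seqGraph (y : Cantor → ℕ → Cantor) : Prod.fst '' seqGraph y = univ :=
  eq_univ_of_forall fun x => ⟨(x, y x 0), ⟨0, rfl⟩, rfl⟩

lemma mk_seqGraph_inter_lt (y : Cantor → ℕ → Cantor) {κ : Cardinal} (hκ : ℵ₀ < κ)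
    {S : Set Cantor} (hS : #S < κ) :
    #(seqGraph y ∩ Prod.fst ⁻¹' S : Set (Cantor × Cantor)) < κ := by
  have hsub : seqGraph y ∩ Prod.fst ⁻¹' S ⊆ range fun q : S × ℕ => ((q.1 : Cantor), y q.1 q.2) := by
    rintro ⟨x, z⟩ ⟨⟨n, hn⟩, hx⟩
    exact ⟨(⟨x, hx⟩, n), Prod.ext rfl hn⟩
  refine (mk_le_mk_of_subset hsub).trans_lt (mk_range_le.trans_lt ?_)
  rw [mk_prod, lift_id, lift_id, mk_nat]
  exact mul_lt_of_lt hκ.le hS hκ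

theorem totallyImperfect_seqGraph {y : Cantor → ℕ → Cantor}
    (hy : ∀ C, IsClosed C → ∃ S : Set Cantor, #S < 𝔠 ∧
      ∀ x ∉ S, (sect C x).Countable → ∀ n, y x n ∉ sect C x) :
    TotallyImperfect (seqGraph y) := by
  intro P hPX hP
  by_contra hne
  obtain ⟨S, hS, hyS⟩ := hy P hP.closed
  obtain ⟨p, hpP, hpS⟩ : ∃ p ∈ P, p.1 ∉ S := by
    by_contra! hsub
    exact (continuum_le_mk_of_perfect hP (nonempty_iff_ne_empty.2 hne)).not_gt <|
      (mk_le_mk_of_subset (subset_inter hPX hsub)).trans_lt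
        (mk_seqGraph_inter_lt y aleph0_lt_continuum hS)
  obtain ⟨n, hn⟩ := hPX hpP
  refine hyS p.1 hpS ((countable_range (y p.1)).mono fun z hz => hPX hz) n ?_
  show (p.1, y p.1 n) ∈ P
  rwa [hn]

theorem menger_seqGraph {y : Cantor → ℕ → Cantor} (hdense : ∀ x, DenseRange (y x))
    (hy : ∀ u : ℕ → ℕ → Set (Cantor × Cantor), (∀ n k, IsOpen (u n k)) →
      (∀ n x, Dense (sect (⋃ k, u n k) x)) → ∃ S : Set Cantor, #S < covMeager ∧
        ∃ F : ℕ → Finset ℕ, ∀ x ∉ S, ∀ m, (x, y x m) ∈ ⋃ n, ⋃ k ∈ F n, u n k) :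
    Menger (seqGraph y) := by
  refine menger_of_forall_nat_covers fun u hu hXu => ?_
  obtain ⟨S, hS, F, hF⟩ := hy u hu fun n x =>
    (hdense x).mono (by rintro _ ⟨m, rfl⟩; exact hXu n ⟨m, rfl⟩)
  obtain ⟨f, hf⟩ := exists_forall_mem_iUnion_of_mk_lt_covMeager
    (mk_seqGraph_inter_lt y aleph0_lt_covMeager hS) u fun n => inter_subset_left.trans (hXu n)
  refine ⟨fun n => insert (f n) (F n), ?_⟩
  rintro ⟨x, z⟩ ⟨m, hm⟩
  obtain rfl : y x m = z := hm
  by_cases hx : x ∈ S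
  · obtain ⟨n, hn⟩ := mem_iUnion.1 (hf (show (x, y x m) ∈ _ from ⟨⟨m, rfl⟩, hx⟩))
    exact mem_iUnion.2 ⟨n, mem_iUnion₂.2 ⟨f n, Finset.mem_insert_self _ _, hn⟩⟩
  · obtain ⟨n, hn⟩ := mem_iUnion.1 (hF x hx m)
    obtain ⟨k, hk, hxk⟩ := mem_iUnion₂.1 hn
    exact mem_iUnion.2 ⟨n, mem_iUnion₂.2 ⟨k, Finset.mem_insert_of_mem hk, hxk⟩⟩

theorem exists_denseRange_forall_notMem_outside_small (h : covMeager = 𝔠)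
    (R : Cantor → Cantor → Set Cantor) (hR : ∀ t x, IsMeagre (R t x)) :
    ∃ y : Cantor → ℕ → Cantor, (∀ x, DenseRange (y x)) ∧
      ∀ t, ∃ S : Set Cantor, #S < 𝔠 ∧ ∀ x ∉ S, ∀ n, y x n ∉ R t x := by
  obtain ⟨σ⟩ : Nonempty (Cantor ≃ (ord 𝔠).ToType) := Cardinal.eq.1 (by simp)
  have hIio : ∀ i : (ord 𝔠).ToType, #(Iio i) < 𝔠 := fun i => by simpa using mk_Iio_lt i
  have hIic : ∀ i : (ord 𝔠).ToType, #(Iic i) < 𝔠 := fun i => by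
    rw [← Iio_insert]
    exact mk_insert_le.trans_lt
      (add_lt_of_lt aleph0_le_continuum (hIio i) (one_lt_aleph0.trans aleph0_lt_continuum))
  choose y hyd hyR using fun x => exists_denseRange_forall_notMem
    (fun i : Iic (σ x) => R (σ.symm i) x) (fun i => hR _ x) (h.symm ▸ hIic (σ x))
  refine ⟨y, hyd, fun t => ⟨σ ⁻¹' Iio (σ t), (mk_preimage_equiv σ _).trans_lt (hIio _),
    fun x hx n => ?_⟩⟩
  simpa using hyR x n ⟨σ t, mem_Iic.2 (not_lt.1 hx)⟩

lemma isMeagre_compl_sect {W : Set (Cantor × Cantor)} (hW : IsOpen W) {x : Cantor}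
    (hd : Dense (sect W x)) : IsMeagre (sect W x)ᶜ := by
  rw [IsMeagre, compl_compl]
  exact residual_of_dense_open (hW.preimage (Continuous.prodMk_right x)) hd

theorem stmt12 (h : covMeager = Cardinal.continuum) :
    ∃ X : Set (Cantor × Cantor), Menger X ∧ TotallyImperfect X ∧
      Prod.fst '' X = univ := by
  obtain ⟨openCode, -, hopenCode⟩ := exists_surjective_cantor_isOpen (Cantor × Cantor)
  obtain ⟨coverCode, hcover, hcoverCode⟩ :=
    exists_surjective_cantor_isOpen_nat_nat (Cantor × Cantor)
  choose W hWo hWd hWF using fun t =>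
    exists_isOpen_dense_preimage_mk_eq_finset (coverCode t) (hcover t)
  obtain ⟨y, hyd, hyR⟩ := exists_denseRange_forall_notMem_outside_small h
    (fun t x => (sect (W t) x)ᶜ ∪ ⋃ (_ : (sect (openCode t)ᶜ x).Countable), sect (openCode t)ᶜ x)
    fun t x => (isMeagre_compl_sect (hWo t) (hWd t x)).union
      (Cantor.isMeagre_of_countable (countable_iUnion fun hc => hc))
  refine ⟨seqGraph y, menger_seqGraph hyd fun u hu hud => ?_,
    totallyImperfect_seqGraph fun C hC => ?_, fst_image_seqGraph y⟩
  · obtain ⟨t, rfl⟩ := hcoverCode u hu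
    obtain ⟨F, hF⟩ := hWF t hud
    obtain ⟨S, hS, hyS⟩ := hyR t
    exact ⟨S, h ▸ hS, F, fun x hx m => hF ▸ not_not.1 fun hW => hyS x hx m (Or.inl hW)⟩
  · obtain ⟨t, ht⟩ := hopenCode Cᶜ hC.isOpen_compl
    obtain ⟨S, hS, hyS⟩ := hyR t
    rw [ht, compl_compl] at hyS
    exact ⟨S, hS, fun x hx hc n hn => hyS x hx n (Or.inr (mem_iUnion.2 ⟨hc, hn⟩))⟩
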